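/- arXiv:2506.01876 — 6 statements merged into one kernel-verified Lean document; each statement's English description precedes it below -/
import Mathlib

section
/- Let H be a nonempty finite type and Z a measurable space. For each h in H let \mu_h be a finite measure on Z, and set \mu = \sum_{h \in H} \mu_h (so each \mu_h \le \mu, hence \mu_h is absolutely continuous with respect to \mu). Then: (i) for every measurable map I : Z \to H one has \sum_{h \in H} \mu_h(\{z : I(z) = h\}) \le \int_Z \max_{h \in H} (d\mu_h/d\mu)(z) \, d\mu(z); and (ii) there exists a measurable map I^* : Z \to H with I^*(z) attaining \max_{h} (d\mu_h/d\mu)(z) for \mu-almost every z, and for any such I^* equality holds, so the supremum of \sum_h \mu_h(\{I = h\}) over all measurable I : Z \to H equals \int_Z \max_h (d\mu_h/d\mu) \, d\mu. -/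
open MeasureTheory

/-- Optimality of the maximum-a-posteriori inference rule.  With `μ = ∑_h μ_h`:
(i) every measurable `I : Z → H` satisfies
`∑_h μ_h {I = h} ≤ ∫ max_h (dμ_h/dμ) dμ`;
(ii) there is a measurable `I*` attaining `max_h (dμ_h/dμ)(z)` for `μ`-a.e. `z`,
any such `I*` achieves equality, and hence the supremum over measurable rules equals
the integral. -/
theorem stmt_0 {H : Type*} [Fintype H] [Nonempty H]
    [MeasurableSpace H] [MeasurableSingletonClass H]
    {Z : Type*} [MeasurableSpace Z]
    (μh : H → Measure Z) [∀ h, IsFiniteMeasure (μh h)]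
    (μ : Measure Z) (hμ : μ = ∑ h : H, μh h) :
    (∀ I : Z → H, Measurable I →
      ∑ h : H, μh h {z | I z = h} ≤ ∫⁻ z, ⨆ h : H, (μh h).rnDeriv μ z ∂μ) ∧
    (∃ Istar : Z → H, Measurable Istar ∧
      (∀ᵐ z ∂μ, (μh (Istar z)).rnDeriv μ z = ⨆ h : H, (μh h).rnDeriv μ z)) ∧
    (∀ I : Z → H, Measurable I →
      (∀ᵐ z ∂μ, (μh (I z)).rnDeriv μ z = ⨆ h : H, (μh h).rnDeriv μ z) →
      ∑ h : H, μh h {z | I z = h} = ∫⁻ z, ⨆ h : H, (μh h).rnDeriv μ z ∂μ) ∧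
    (⨆ I : {I : Z → H // Measurable I}, ∑ h : H, μh h {z | I.1 z = h}) =
      ∫⁻ z, ⨆ h : H, (μh h).rnDeriv μ z ∂μ := by
  classical
  letI : LinearOrder H := LinearOrder.lift' (Fintype.equivFin H) (Fintype.equivFin H).injective
  set f : H → Z → ENNReal := fun h => (μh h).rnDeriv μ with hf
  set S : Z → ENNReal := fun z => ⨆ h : H, f h z with hS
  have hfm : ∀ h, Measurable (f h) := fun h => (μh h).measurable_rnDeriv μ
  have hSm : Measurable S := Measurable.iSup hfm
  have hμfin : IsFiniteMeasure μ := by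
    constructor
    rw [hμ, Measure.finset_sum_apply]
    exact ENNReal.sum_lt_top.2 fun h _ => measure_lt_top _ _
  have hac : ∀ h, μh h ≪ μ := by
    intro h
    refine Measure.absolutelyContinuous_of_le (Measure.le_iff.2 fun s hs => ?_)
    rw [hμ, Measure.finset_sum_apply]
    exact Finset.single_le_sum (f := fun h' => μh h' s) (fun _ _ => zero_le) (Finset.mem_univ h)
  have hset : ∀ (h : H) (s : Set Z), MeasurableSet s → μh h s = ∫⁻ z in s, f h z ∂μ :=
    fun h s _ => (Measure.setLIntegral_rnDeriv (hac h) s).symm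
  -- key identity
  have key : ∀ I : Z → H, Measurable I →
      ∑ h : H, μh h {z | I z = h} = ∫⁻ z, f (I z) z ∂μ := by
    intro I hI
    have hms : ∀ h, MeasurableSet {z | I z = h} := fun h => hI (measurableSet_singleton h)
    calc ∑ h : H, μh h {z | I z = h}
        = ∑ h : H, ∫⁻ z in {z | I z = h}, f h z ∂μ :=
          Finset.sum_congr rfl fun h _ => hset h _ (hms h)
      _ = ∑ h : H, ∫⁻ z, Set.indicator {z | I z = h} (f h) z ∂μ :=
          Finset.sum_congr rfl fun h _ => (lintegral_indicator (hms h) _).symm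
      _ = ∫⁻ z, ∑ h : H, Set.indicator {z | I z = h} (f h) z ∂μ := by
          rw [lintegral_finset_sum]
          exact fun h _ => (hfm h).indicator (hms h)
      _ = ∫⁻ z, f (I z) z ∂μ := by
          refine lintegral_congr fun z => ?_
          rw [Finset.sum_eq_single (I z)]
          · exact Set.indicator_of_mem (show z ∈ {z' | I z' = I z} from rfl) _
          · intro h _ hne
            exact Set.indicator_of_notMem (fun hzs => hne hzs.symm) _
          · simp
  -- part (i)
  have part1 : ∀ I : Z → H, Measurable I →
      ∑ h : H, μh h {z | I z = h} ≤ ∫⁻ z, S z ∂μ := by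
    intro I hI
    rw [key I hI]
    exact lintegral_mono fun z => le_iSup (fun h => f h z) (I z)
  -- sup attained
  have hmax : ∀ z, ∃ h, f h z = S z := by
    intro z
    obtain ⟨h, hh⟩ := Finite.exists_max (fun h => f h z)
    exact ⟨h, le_antisymm (le_iSup (fun h' => f h' z) h) (iSup_le hh)⟩
  set A : Z → Finset H := fun z => Finset.univ.filter fun h => f h z = S z with hA
  have hAmem : ∀ z h, h ∈ A z ↔ f h z = S z := by
    intro z h
    simp [hA]
  have hAne : ∀ z, (A z).Nonempty := by
    intro z
    obtain ⟨h, hh⟩ := hmax z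
    exact ⟨h, (hAmem z h).2 hh⟩
  set Istar : Z → H := fun z => (A z).min' (hAne z) with hIstar
  have hIstar_spec : ∀ z, f (Istar z) z = S z := by
    intro z
    exact (hAmem z _).1 (Finset.min'_mem (A z) (hAne z))
  have hIstar_eq : ∀ h z, Istar z = h ↔ (f h z = S z ∧ ∀ h' < h, f h' z ≠ S z) := by
    intro h z
    constructor
    · rintro rfl
      refine ⟨hIstar_spec z, fun h' hlt hne => absurd ?_ (not_le.2 hlt)⟩
      exact Finset.min'_le (A z) h' ((hAmem z h').2 hne)
    · rintro ⟨h1, h2⟩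
      have hmem : f (Istar z) z = S z := hIstar_spec z
      have hle : Istar z ≤ h := Finset.min'_le (A z) h ((hAmem z h).2 h1)
      rcases hle.lt_or_eq with hlt | heq
      · exact absurd hmem (h2 _ hlt)
      · exact heq
  have hIstar_meas : Measurable Istar := by
    refine measurable_to_countable' fun h => ?_
    have : Istar ⁻¹' {h} =
        {z | f h z = S z} ∩ ⋂ (h' : H) (_ : h' < h), {z | f h' z = S z}ᶜ := by
      ext z
      simp only [Set.mem_preimage, Set.mem_singleton_iff, hIstar_eq h z, Set.mem_inter_iff,
        Set.mem_iInter, Set.mem_compl_iff, Set.mem_setOf_eq]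
    rw [this]
    have heqset : ∀ h' : H, MeasurableSet {z | f h' z = S z} := by
      intro h'
      have : {z | f h' z = S z} = {z | f h' z ≤ S z} ∩ {z | S z ≤ f h' z} := by
        ext z; simp [le_antisymm_iff]
      rw [this]
      exact (measurableSet_le (hfm h') hSm).inter (measurableSet_le hSm (hfm h'))
    exact (heqset h).inter
      (MeasurableSet.iInter fun h' => MeasurableSet.iInter fun _ => (heqset h').compl)
  -- part (iii): equality for any a.e. maximizer
  have part3 : ∀ I : Z → H, Measurable I →
      (∀ᵐ z ∂μ, f (I z) z = S z) →
      ∑ h : H, μh h {z | I z = h} = ∫⁻ z, S z ∂μ := by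
    intro I hI hae
    rw [key I hI]
    exact lintegral_congr_ae hae
  refine ⟨part1, ⟨Istar, hIstar_meas, Filter.Eventually.of_forall hIstar_spec⟩, part3, ?_⟩
  refine le_antisymm (iSup_le fun I => part1 I.1 I.2) ?_
  have := part3 Istar hIstar_meas (Filter.Eventually.of_forall hIstar_spec)
  rw [← this]
  exact le_iSup (fun I : {I : Z → H // Measurable I} => ∑ h : H, μh h {z | I.1 z = h})
    ⟨Istar, hIstar_meas⟩
end

section
/- For all real numbers s \ge 0 and v \ge 0, \sqrt{2/\pi} \int_0^{\infty} \exp( s \lambda - (1+v) \lambda^2 / 2 ) \, d\lambda \ge \exp( s^2 / (2(1+v)) ) / \sqrt{1+v}. -/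
open MeasureTheory Real

lemma shift_Ioi_integral (g : ℝ → ℝ) (c : ℝ) :
    ∫ x in Set.Ioi (0:ℝ), g (x - c) = ∫ x in Set.Ioi (-c), g x := by
  rw [← integral_indicator measurableSet_Ioi, ← integral_indicator measurableSet_Ioi,
    ← integral_sub_right_eq_self (Set.indicator (Set.Ioi (-c)) g) c]
  congr 1; ext x
  simp only [Set.indicator_apply, Set.mem_Ioi]
  exact if_congr (by constructor <;> intro <;> linarith) rfl rfl

/-- Method-of-mixtures bound: for `s ≥ 0` and `v ≥ 0`,
`√(2/π) ∫_0^∞ exp(s λ - (1+v) λ²/2) dλ ≥ exp(s²/(2(1+v))) / √(1+v)`. -/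
theorem stmt_3 (s v : ℝ) (hs : 0 ≤ s) (hv : 0 ≤ v) :
    Real.exp (s ^ 2 / (2 * (1 + v))) / Real.sqrt (1 + v) ≤
      Real.sqrt (2 / Real.pi) *
        ∫ x in Set.Ioi (0 : ℝ), Real.exp (s * x - (1 + v) * x ^ 2 / 2) := by
  set a : ℝ := 1 + v with ha_def
  have ha : 0 < a := by positivity
  set c : ℝ := s / a with hc_def
  have hc : 0 ≤ c := by positivity
  have hpt : ∀ x : ℝ, Real.exp (s * x - a * x ^ 2 / 2)
      = Real.exp (s ^ 2 / (2 * a)) * Real.exp (-(a/2) * (x - c) ^ 2) := by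
    intro x
    rw [← Real.exp_add]
    congr 1
    rw [hc_def]
    field_simp
    ring
  have h1 : ∫ x in Set.Ioi (0:ℝ), Real.exp (s * x - a * x ^ 2 / 2)
      = Real.exp (s ^ 2 / (2 * a)) * ∫ x in Set.Ioi (0:ℝ), Real.exp (-(a/2) * (x - c) ^ 2) := by
    rw [← integral_const_mul]
    exact setIntegral_congr_fun measurableSet_Ioi fun x _ => hpt x
  have hshift : ∫ x in Set.Ioi (0:ℝ), Real.exp (-(a/2) * (x - c) ^ 2)
      = ∫ x in Set.Ioi (-c), Real.exp (-(a/2) * x ^ 2) :=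
    shift_Ioi_integral (fun x => Real.exp (-(a/2) * x ^ 2)) c
  have hint : Integrable (fun x : ℝ => Real.exp (-(a/2) * x ^ 2)) :=
    integrable_exp_neg_mul_sq (by positivity)
  have hmono : ∫ x in Set.Ioi (0:ℝ), Real.exp (-(a/2) * x ^ 2)
      ≤ ∫ x in Set.Ioi (-c), Real.exp (-(a/2) * x ^ 2) := by
    apply setIntegral_mono_set hint.integrableOn
    · exact Filter.Eventually.of_forall fun x => (Real.exp_pos _).le
    · exact Filter.Eventually.of_forall (Set.Ioi_subset_Ioi (by linarith))
  have hgauss : ∫ x in Set.Ioi (0:ℝ), Real.exp (-(a/2) * x ^ 2) = Real.sqrt (π / (a/2)) / 2 :=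
    integral_gaussian_Ioi (a/2)
  have key : Real.sqrt (π / (a/2)) / 2
      ≤ ∫ x in Set.Ioi (0:ℝ), Real.exp (-(a/2) * (x - c) ^ 2) := by
    rw [hshift, ← hgauss]; exact hmono
  have hs2 : (0:ℝ) < Real.sqrt (2 / π) := Real.sqrt_pos.mpr (by positivity)
  calc Real.exp (s ^ 2 / (2 * a)) / Real.sqrt a
      = Real.sqrt (2 / π) * (Real.exp (s ^ 2 / (2 * a)) * (Real.sqrt (π / (a/2)) / 2)) := by
        rw [show Real.sqrt (2/π) * (Real.exp (s ^ 2 / (2 * a)) * (Real.sqrt (π / (a/2)) / 2))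
            = Real.exp (s ^ 2 / (2 * a)) * (Real.sqrt (2/π) * Real.sqrt (π / (a/2)) / 2) by ring]
        rw [← Real.sqrt_mul (by positivity)]
        rw [show 2 / π * (π / (a/2)) = 4 / a by field_simp; ring]
        rw [show (4:ℝ)/a = 2^2 / a by norm_num, Real.sqrt_div (by positivity), Real.sqrt_sq (by norm_num)]
        ring
    _ ≤ Real.sqrt (2 / π) *
        (Real.exp (s ^ 2 / (2 * a)) * ∫ x in Set.Ioi (0:ℝ), Real.exp (-(a/2) * (x - c) ^ 2)) := by
        gcongr
    _ = Real.sqrt (2 / π) * ∫ x in Set.Ioi (0:ℝ), Real.exp (s * x - a * x ^ 2 / 2) := by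
        rw [h1]
end

section
/- Let K \ge 2 be an integer and let c_1 > 0 and c_a > 0 for a = 2, \dots, K be positive real numbers. Write \Delta(K) = \{ \omega \in \mathbb{R}^K : \omega_a \ge 0 \text{ for all } a, \ \sum_{a=1}^K \omega_a = 1 \} for the probability simplex. Then \sup_{\omega \in \Delta(K)} \left[ \omega_1 c_1 + \min_{2 \le a \le K} \omega_a c_a \right] = \max\left( c_1, \ \left( \sum_{a=2}^K c_a^{-1} \right)^{-1} \right), and the supremum is attained (at \omega = e_1 if c_1 is the larger value, and at \omega_1 = 0, \omega_a \propto c_a^{-1} for a \ge 2 otherwise). -/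
/-- Allocation identity on the simplex: for `K ≥ 2` and positive `c_a`,
`sup_{ω ∈ Δ(K)} [ω₁ c₁ + min_{a ≠ 1} ω_a c_a] = max(c₁, (∑_{a ≠ 1} c_a⁻¹)⁻¹)`,
and the supremum is attained.  (Arm `1` is the index `a0 : Fin K` with value `0`.) -/
theorem stmt_5 (K : ℕ) (hK : 2 ≤ K) (c : Fin K → ℝ) (hc : ∀ a, 0 < c a)
    (a0 : Fin K) (ha0 : (a0 : ℕ) = 0) :
    IsGreatest
      {y : ℝ | ∃ ω : Fin K → ℝ, (∀ a, 0 ≤ ω a) ∧ (∑ a, ω a) = 1 ∧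
        y = ω a0 * c a0 + ⨅ a : {a : Fin K // a ≠ a0}, ω a.1 * c a.1}
      (max (c a0) ((∑ a : {a : Fin K // a ≠ a0}, (c a.1)⁻¹)⁻¹)) := by
  have ha1 : (⟨1, lt_of_lt_of_le one_lt_two hK⟩ : Fin K) ≠ a0 := by
    intro h
    have : (1 : ℕ) = 0 := by rw [← ha0, ← h]
    exact one_ne_zero this
  haveI hne : Nonempty {a : Fin K // a ≠ a0} := ⟨⟨_, ha1⟩⟩
  set s := ∑ a : {a : Fin K // a ≠ a0}, (c a.1)⁻¹ with hs
  have hspos : 0 < s :=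
    Finset.sum_pos (fun a _ => inv_pos.2 (hc a.1)) Finset.univ_nonempty
  have hsplit : ∀ f : Fin K → ℝ,
      (∑ a, f a) = f a0 + ∑ a : {a : Fin K // a ≠ a0}, f a.1 := by
    intro f
    rw [← Finset.sum_subtype (Finset.univ.erase a0)
      (fun x => by simp [Finset.mem_erase]) f]
    exact (Finset.add_sum_erase _ f (Finset.mem_univ a0)).symm
  constructor
  · rcases le_or_gt s⁻¹ (c a0) with h | h
    · refine ⟨fun a => if a = a0 then 1 else 0, ?_, ?_, ?_⟩
      · intro a; positivity
      · simp
      · have h1 : (⨅ a : {a : Fin K // a ≠ a0},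
            (if a.1 = a0 then (1:ℝ) else 0) * c a.1) = 0 := by
          rw [iInf_congr (fun a => by rw [if_neg a.2, zero_mul])]
          exact ciInf_const
        dsimp only
        rw [h1, if_pos rfl, max_eq_left h]; ring
    · refine ⟨fun a => if a = a0 then 0 else (c a)⁻¹ * s⁻¹, ?_, ?_, ?_⟩
      · intro a
        dsimp only
        split
        · exact le_rfl
        · exact mul_nonneg (inv_nonneg.2 (hc _).le) (inv_nonneg.2 hspos.le)
      · dsimp only
        rw [hsplit, if_pos rfl]
        have : (∑ a : {a : Fin K // a ≠ a0},
            (if a.1 = a0 then (0:ℝ) else (c a.1)⁻¹ * s⁻¹))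
            = ∑ a : {a : Fin K // a ≠ a0}, (c a.1)⁻¹ * s⁻¹ :=
          Finset.sum_congr rfl (fun a _ => by rw [if_neg a.2])
        rw [this, ← Finset.sum_mul, ← hs, mul_inv_cancel₀ hspos.ne']
        ring
      · have key : ∀ a : {a : Fin K // a ≠ a0},
            (if a.1 = a0 then (0:ℝ) else (c a.1)⁻¹ * s⁻¹) * c a.1 = s⁻¹ := by
          intro a
          rw [if_neg a.2]
          field_simp
          exact div_self (hc a.1).ne'
        have h1 : (⨅ a : {a : Fin K // a ≠ a0},
            (if a.1 = a0 then (0:ℝ) else (c a.1)⁻¹ * s⁻¹) * c a.1) = s⁻¹ := by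
          rw [iInf_congr key]; exact ciInf_const
        dsimp only
        rw [h1, if_pos rfl, max_eq_right h.le]; ring
  · rintro y ⟨ω, hω0, hωs, rfl⟩
    set m := ⨅ a : {a : Fin K // a ≠ a0}, ω a.1 * c a.1 with hm
    have hbdd : BddBelow (Set.range fun a : {a : Fin K // a ≠ a0} => ω a.1 * c a.1) :=
      (Set.finite_range _).bddBelow
    have hm_le : ∀ a : {a : Fin K // a ≠ a0}, m ≤ ω a.1 * c a.1 := fun a => ciInf_le hbdd a
    have hm0 : 0 ≤ m := le_ciInf fun a => mul_nonneg (hω0 a.1) (hc a.1).le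
    have hsum : ω a0 + ∑ a : {a : Fin K // a ≠ a0}, ω a.1 = 1 := by
      rw [← hsplit]; exact hωs
    have hms : m * s ≤ 1 - ω a0 := by
      have h1 : ∑ a : {a : Fin K // a ≠ a0}, m * (c a.1)⁻¹
          ≤ ∑ a : {a : Fin K // a ≠ a0}, ω a.1 := by
        refine Finset.sum_le_sum fun a _ => ?_
        rw [mul_comm, inv_mul_le_iff₀ (hc a.1)]
        exact (hm_le a).trans_eq (mul_comm _ _)
      calc m * s = ∑ a : {a : Fin K // a ≠ a0}, m * (c a.1)⁻¹ := by
            rw [Finset.mul_sum]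
        _ ≤ ∑ a : {a : Fin K // a ≠ a0}, ω a.1 := h1
        _ = 1 - ω a0 := by linarith
    have hss : s⁻¹ * s = 1 := inv_mul_cancel₀ hspos.ne'
    rcases le_total s⁻¹ (c a0) with hcs | hcs
    · rw [max_eq_left hcs]
      have h1 : 1 ≤ s * c a0 := by nlinarith
      nlinarith [hm0, mul_le_mul_of_nonneg_right hms (hc a0).le]
    · rw [max_eq_right hcs]
      nlinarith [hω0 a0, mul_le_mul_of_nonneg_right hms (inv_nonneg.2 hspos.le),
        mul_nonneg (hω0 a0) (sub_nonneg.2 hcs)]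
end

section
/- Let c_1 \ge 0 and c_2 \ge 0 be real numbers. Then \sup \left\{ \omega_1 c_1 + \frac{\omega_2 \omega_3}{\omega_2 + \omega_3} c_2 \ : \ \omega_1, \omega_2, \omega_3 \ge 0, \ \omega_1 + \omega_2 + \omega_3 = 1 \right\} = \max\left( c_1, \ \frac{c_2}{4} \right), with the convention that \frac{\omega_2 \omega_3}{\omega_2 + \omega_3} = 0 when \omega_2 + \omega_3 = 0; the supremum is attained (at \omega = (1,0,0) in the first case and \omega = (0, 1/2, 1/2) in the second). -/
/-! The weight `ω₂ω₃/(ω₂+ω₃)` is at most `(ω₂+ω₃)/4` by AM-GM, with equality at `ω₂ = ω₃`.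
So the objective is at most the convex combination `ω₁ c₁ + (1 - ω₁) c₂/4 ≤ max c₁ (c₂/4)`,
which is attained at `(1,0,0)` or at `(0,1/2,1/2)`. -/

lemma ite_mul_div_add_le_add_div_four {a b : ℝ} (ha : 0 ≤ a) (hb : 0 ≤ b) :
    (if a + b = 0 then 0 else a * b / (a + b)) ≤ (a + b) / 4 := by
  split_ifs with hab
  · linarith
  · have hpos : 0 < a + b := lt_of_le_of_ne (by linarith) (Ne.symm hab)
    rw [div_le_div_iff₀ hpos four_pos]
    nlinarith [four_mul_le_sq_add a b]

lemma mul_add_one_sub_mul_le_max {t x y : ℝ} (ht0 : 0 ≤ t) (ht1 : t ≤ 1) :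
    t * x + (1 - t) * y ≤ max x y := by
  calc t * x + (1 - t) * y ≤ t * max x y + (1 - t) * max x y := by
        gcongr
        exacts [le_max_left x y, le_max_right x y]
    _ = max x y := by ring

theorem stmt_7_general (c1 c2 : ℝ) (hc2 : 0 ≤ c2) :
    IsGreatest
      {y : ℝ | ∃ ω1 ω2 ω3 : ℝ, 0 ≤ ω1 ∧ 0 ≤ ω2 ∧ 0 ≤ ω3 ∧ ω1 + ω2 + ω3 = 1 ∧
        y = ω1 * c1 + (if ω2 + ω3 = 0 then 0 else ω2 * ω3 / (ω2 + ω3)) * c2}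
      (max c1 (c2 / 4)) := by
  refine ⟨?_, ?_⟩
  · rcases le_total (c2 / 4) c1 with h | h
    · exact ⟨1, 0, 0, by norm_num, by norm_num, by norm_num, by norm_num, by simp [max_eq_left h]⟩
    · refine ⟨0, 1 / 2, 1 / 2, by norm_num, by norm_num, by norm_num, by norm_num, ?_⟩
      rw [max_eq_right h]
      norm_num
      ring
  · rintro y ⟨ω1, ω2, ω3, h1, h2, h3, hsum, rfl⟩
    have h23 : ω2 + ω3 = 1 - ω1 := by linarith
    calc ω1 * c1 + (if ω2 + ω3 = 0 then 0 else ω2 * ω3 / (ω2 + ω3)) * c2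
        ≤ ω1 * c1 + (1 - ω1) / 4 * c2 := by
          gcongr
          exact h23 ▸ ite_mul_div_add_le_add_div_four h2 h3
      _ = ω1 * c1 + (1 - ω1) * (c2 / 4) := by ring
      _ ≤ max c1 (c2 / 4) := mul_add_one_sub_mul_le_max h1 (by linarith)

/-- Three-armed magic-action allocation: for `c₁, c₂ ≥ 0`,
`sup { ω₁ c₁ + (ω₂ ω₃/(ω₂+ω₃)) c₂ : ω ∈ Δ(3) } = max(c₁, c₂/4)` (with the convention
that `ω₂ ω₃/(ω₂+ω₃) = 0` when `ω₂ + ω₃ = 0`), and the supremum is attained. -/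
theorem stmt_7 (c1 c2 : ℝ) (hc1 : 0 ≤ c1) (hc2 : 0 ≤ c2) :
    IsGreatest
      {y : ℝ | ∃ ω1 ω2 ω3 : ℝ, 0 ≤ ω1 ∧ 0 ≤ ω2 ∧ 0 ≤ ω3 ∧ ω1 + ω2 + ω3 = 1 ∧
        y = ω1 * c1 + (if ω2 + ω3 = 0 then 0 else ω2 * ω3 / (ω2 + ω3)) * c2}
      (max c1 (c2 / 4)) :=
  stmt_7_general c1 c2 hc2
end

section
/- Let K \ge 2 be an integer, \sigma > 0, \Delta_0 > 0, and \mu \in \mathbb{R}^K with \mu_1 - \mu_a \ge \Delta_0 for every a \ne 1. Define the gaps \Delta_a = \mu_1 - \mu_a for a \ne 1 and \Delta_1 = 0, and set \theta_a = \Delta_a + \Delta_0 for all a. Let \mathrm{Alt} = \bigcup_{\bar{a} \ne 1} \{ \mu' \in \mathbb{R}^K : \mu'_{\bar{a}} - \mu'_b \ge \Delta_0 \text{ for all } b \ne \bar{a} \}, and write \Delta(K) = \{ \omega \in \mathbb{R}^K : \omega_a \ge 0, \sum_a \omega_a = 1 \} for the probability simplex. Then \frac{1}{4\sigma^2 \sum_{b=1}^K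 \theta_b^{-2}} \ \le \ \sup_{\omega \in \Delta(K)} \inf_{\mu' \in \mathrm{Alt}} \sum_{a=1}^K \omega_a \frac{(\mu_a - \mu'_a)^2}{2\sigma^2} \ \le \ \frac{1}{2\sigma^2} \max\left( \Delta_0^2, \ \left( \sum_{a \ne 1} \Delta_a^{-2} \right)^{-1} \right). -/
lemma key_ineq (Δ0 t x y : ℝ) (hΔ0 : 0 < Δ0) (ht : 2*Δ0 ≤ t) (hxy : t ≤ x + y) :
    1/2 ≤ (Δ0^2)⁻¹ * x^2 + (t^2)⁻¹ * y^2 := by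
  have ht0 : 0 < t := by linarith
  have h2 : t^2 ≤ (x+y)^2 := by nlinarith
  have h3 : Δ0^2*4 ≤ t^2 := by nlinarith
  have h1 : 0 ≤ (x*t^2 - y*Δ0^2)^2 := sq_nonneg _
  have h4 : Δ0^2*t^2*(t^2) ≤ Δ0^2*t^2*((x+y)^2) :=
    mul_le_mul_of_nonneg_left h2 (by positivity)
  have h5 : Δ0^2*t^2*(x+y)^2 ≤ (Δ0^2+t^2) * (x^2*t^2 + Δ0^2*y^2) := by nlinarith [h1]
  have h7 : (Δ0^2+t^2) * (1/2*(Δ0^2*t^2)) ≤ Δ0^2*t^2*(t^2) := by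
    nlinarith [h3, sq_nonneg (Δ0*t), mul_nonneg (mul_nonneg (sq_nonneg Δ0) (sq_nonneg Δ0)) (sq_nonneg t)]
  have h8 : (Δ0^2+t^2) * (1/2*(Δ0^2*t^2)) ≤ (Δ0^2+t^2)*(x^2*t^2+Δ0^2*y^2) :=
    le_trans h7 (le_trans h4 h5)
  have h9 := le_of_mul_le_mul_left h8 (by positivity : (0:ℝ) < Δ0^2+t^2)
  rw [inv_mul_eq_div, inv_mul_eq_div, div_add_div _ _ (by positivity) (by positivity),
    le_div_iff₀ (by positivity)]
  nlinarith [h9]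

/-- Two-sided bound on the inverse characteristic time for Gaussian best-arm
identification with a known minimum gap `Δ₀`.  Arm `1` is the index `a0 : Fin K`
with value `0`; `Δ_a = μ₁ - μ_a` for `a ≠ 1`, `Δ₁ = 0`, `θ_a = Δ_a + Δ₀`, and
`Alt` is the set of models (satisfying the gap constraint) whose best arm is not arm 1.
Then
`1/(4σ² ∑_b θ_b⁻²) ≤ sup_{ω ∈ Δ(K)} inf_{μ' ∈ Alt} ∑_a ω_a (μ_a - μ'_a)²/(2σ²)
  ≤ (1/(2σ²)) max(Δ₀², (∑_{a ≠ 1} Δ_a⁻²)⁻¹)`. -/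
theorem stmt_8 (K : ℕ) (hK : 2 ≤ K) (σ Δ0 : ℝ) (hσ : 0 < σ) (hΔ0 : 0 < Δ0)
    (a0 : Fin K) (ha0 : (a0 : ℕ) = 0)
    (μ : Fin K → ℝ) (hgap : ∀ a, a ≠ a0 → Δ0 ≤ μ a0 - μ a)
    (Δ θ : Fin K → ℝ)
    (hΔ : ∀ a, Δ a = if a = a0 then 0 else μ a0 - μ a)
    (hθ : ∀ a, θ a = Δ a + Δ0)
    (Alt : Set (Fin K → ℝ))
    (hAlt : Alt = {μ' | ∃ abar : Fin K, abar ≠ a0 ∧ ∀ b, b ≠ abar → Δ0 ≤ μ' abar - μ' b}) :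
    1 / (4 * σ ^ 2 * ∑ b, ((θ b) ^ 2)⁻¹) ≤
      sSup {y : ℝ | ∃ ω : Fin K → ℝ, (∀ a, 0 ≤ ω a) ∧ (∑ a, ω a) = 1 ∧
        y = sInf {w : ℝ | ∃ μ' ∈ Alt, w = ∑ a, ω a * ((μ a - μ' a) ^ 2 / (2 * σ ^ 2))}} ∧
    sSup {y : ℝ | ∃ ω : Fin K → ℝ, (∀ a, 0 ≤ ω a) ∧ (∑ a, ω a) = 1 ∧
        y = sInf {w : ℝ | ∃ μ' ∈ Alt, w = ∑ a, ω a * ((μ a - μ' a) ^ 2 / (2 * σ ^ 2))}} ≤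
      1 / (2 * σ ^ 2) *
        max (Δ0 ^ 2) ((∑ a : {a : Fin K // a ≠ a0}, ((Δ a.1) ^ 2)⁻¹)⁻¹) := by
  have hσ2 : (0:ℝ) < 2 * σ ^ 2 := by positivity
  have hne : Nonempty (Fin K) := ⟨a0⟩
  obtain ⟨a1, ha1⟩ : ∃ a : Fin K, a ≠ a0 := by
    refine ⟨⟨1, by omega⟩, ?_⟩
    intro h
    apply_fun Fin.val at h
    simp [ha0] at h
  have hΔge : ∀ a, a ≠ a0 → Δ0 ≤ Δ a := by
    intro a ha; rw [hΔ a, if_neg ha]; exact hgap a ha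
  have hθa0 : θ a0 = Δ0 := by rw [hθ, hΔ, if_pos rfl, zero_add]
  have hθge2 : ∀ a, a ≠ a0 → 2*Δ0 ≤ θ a := by
    intro a ha; rw [hθ]; linarith [hΔge a ha]
  have hθpos : ∀ a, 0 < θ a := by
    intro a
    by_cases h : a = a0
    · rw [h, hθa0]; exact hΔ0
    · linarith [hθge2 a h]
  set T := ∑ b, ((θ b) ^ 2)⁻¹ with hTdef
  have hTpos : 0 < T := by
    refine Finset.sum_pos (fun b _ => ?_) Finset.univ_nonempty
    have := hθpos b; positivity
  -- construction: make abar the best arm cheaply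
  have hcons : ∀ abar : Fin K, abar ≠ a0 → ∀ ω : Fin K → ℝ,
      ∃ μ' ∈ Alt, (∑ a, ω a * ((μ a - μ' a) ^ 2 / (2 * σ ^ 2))) =
        ω a0 * Δ0^2/(2*σ^2) + ω abar * (Δ abar)^2/(2*σ^2) := by
    intro abar hbar ω
    set μ' : Fin K → ℝ := fun b => if b = abar then μ a0 else if b = a0 then μ a0 - Δ0 else μ b
      with hμ'
    have e1 : μ' abar = μ a0 := by rw [hμ']; simp
    have e0 : μ' a0 = μ a0 - Δ0 := by rw [hμ']; simp [Ne.symm hbar]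
    refine ⟨μ', ?_, ?_⟩
    · rw [hAlt]
      refine ⟨abar, hbar, fun b hb => ?_⟩
      by_cases hb0 : b = a0
      · subst hb0
        rw [e1, e0]
        linarith
      · have e2 : μ' b = μ b := by rw [hμ']; simp [hb, hb0]
        rw [e1, e2]
        exact hgap b hb0
    · have hz : ∀ a ∈ Finset.univ, a ∉ ({a0, abar} : Finset (Fin K)) →
          ω a * ((μ a - μ' a) ^ 2 / (2 * σ ^ 2)) = 0 := by
        intro a _ ha
        simp only [Finset.mem_insert, Finset.mem_singleton] at ha
        push_neg at ha
        have e2 : μ' a = μ a := by rw [hμ']; simp [ha.1, ha.2]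
        rw [e2]
        simp
      rw [← Finset.sum_subset (Finset.subset_univ ({a0, abar} : Finset (Fin K))) hz,
        Finset.sum_pair (Ne.symm hbar)]
      rw [e0, e1, hΔ abar, if_neg hbar]
      ring
  -- the subtype sum
  have hD : (∑ a : {a : Fin K // a ≠ a0}, ((Δ a.1) ^ 2)⁻¹) =
      ∑ a ∈ Finset.univ.erase a0, ((Δ a) ^ 2)⁻¹ :=
    (Finset.sum_subtype (Finset.univ.erase a0)
      (fun x => by simp [Finset.mem_erase]) (fun a => ((Δ a) ^ 2)⁻¹)).symm
  set D := ∑ a ∈ Finset.univ.erase a0, ((Δ a) ^ 2)⁻¹ with hDdef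
  have hDpos : 0 < D := by
    refine Finset.sum_pos (fun a ha => ?_) ⟨a1, Finset.mem_erase.mpr ⟨ha1, Finset.mem_univ a1⟩⟩
    have h1 := hΔge a (Finset.mem_erase.mp ha).1
    have h2 : 0 < Δ a := lt_of_lt_of_le hΔ0 h1
    positivity
  set C := 1 / (2 * σ ^ 2) *
      max (Δ0 ^ 2) ((∑ a : {a : Fin K // a ≠ a0}, ((Δ a.1) ^ 2)⁻¹)⁻¹) with hCdef
  have hCnn : 0 ≤ C := mul_nonneg (by positivity) (le_trans (sq_nonneg Δ0) (le_max_left _ _))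
  -- upper bound for every value of the inner inf
  have hub : ∀ ω : Fin K → ℝ, (∀ a, 0 ≤ ω a) → (∑ a, ω a) = 1 →
      sInf {w : ℝ | ∃ μ' ∈ Alt, w = ∑ a, ω a * ((μ a - μ' a) ^ 2 / (2 * σ ^ 2))} ≤ C := by
    intro ω hω0 hω1
    have hsum_erase : ∑ a ∈ Finset.univ.erase a0, ω a = 1 - ω a0 := by
      have h := Finset.add_sum_erase Finset.univ ω (Finset.mem_univ a0)
      rw [hω1] at h
      linarith
    have hωa0le : ω a0 ≤ 1 := by
      rw [← hω1]; exact Finset.single_le_sum (fun a _ => hω0 a) (Finset.mem_univ a0)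
    have hex : ∃ abar, abar ≠ a0 ∧ ω abar * (Δ abar)^2 * D ≤ 1 - ω a0 := by
      by_contra hcon
      push_neg at hcon
      have hlt : ∀ a ∈ Finset.univ.erase a0, (1 - ω a0) * (((Δ a)^2)⁻¹ * D⁻¹) < ω a := by
        intro a ha
        have ha' := (Finset.mem_erase.mp ha).1
        have h1 := hcon a ha'
        have hΔa : 0 < Δ a := lt_of_lt_of_le hΔ0 (hΔge a ha')
        have hc : 0 < ((Δ a)^2)⁻¹ * D⁻¹ := by positivity
        have h2 := mul_lt_mul_of_pos_right h1 hc
        have key : (ω a * (Δ a)^2 * D) * (((Δ a)^2)⁻¹ * D⁻¹) = ω a := by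
          field_simp
        rw [key] at h2
        exact h2
      have hstrict := Finset.sum_lt_sum_of_nonempty
        ⟨a1, Finset.mem_erase.mpr ⟨ha1, Finset.mem_univ a1⟩⟩ hlt
      have heq : ∑ a ∈ Finset.univ.erase a0, (1 - ω a0) * (((Δ a)^2)⁻¹ * D⁻¹)
          = 1 - ω a0 := by
        rw [← Finset.mul_sum, ← Finset.sum_mul]
        have hsum : ∑ a ∈ Finset.univ.erase a0, ((Δ a) ^ 2)⁻¹ = D := hDdef.symm
        rw [hsum, mul_inv_cancel₀ (ne_of_gt hDpos), mul_one]
      rw [heq, hsum_erase] at hstrict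
      exact lt_irrefl _ hstrict
    obtain ⟨abar, hbar, hA⟩ := hex
    obtain ⟨μ', hμ'Alt, hcost⟩ := hcons abar hbar ω
    have h1 : ω abar * (Δ abar)^2 ≤ (1 - ω a0) * D⁻¹ := by
      have h := (le_div_iff₀ hDpos).mpr hA
      rwa [div_eq_mul_inv] at h
    have hM1 : Δ0^2 ≤ max (Δ0 ^ 2) ((∑ a : {a : Fin K // a ≠ a0}, ((Δ a.1) ^ 2)⁻¹)⁻¹) :=
      le_max_left _ _
    have hM2 : D⁻¹ ≤ max (Δ0 ^ 2) ((∑ a : {a : Fin K // a ≠ a0}, ((Δ a.1) ^ 2)⁻¹)⁻¹) := by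
      rw [← hD] at hDdef
      rw [hDdef]
      exact le_max_right _ _
    set M := max (Δ0 ^ 2) ((∑ a : {a : Fin K // a ≠ a0}, ((Δ a.1) ^ 2)⁻¹)⁻¹) with hMdef
    have hMtot : ω a0 * Δ0^2 + ω abar * (Δ abar)^2 ≤ M := by
      have e1 : ω a0 * Δ0^2 ≤ ω a0 * M := mul_le_mul_of_nonneg_left hM1 (hω0 a0)
      have e2 : ω abar * (Δ abar)^2 ≤ (1 - ω a0) * M :=
        le_trans h1 (mul_le_mul_of_nonneg_left hM2 (by linarith))
      calc ω a0 * Δ0^2 + ω abar * (Δ abar)^2 ≤ ω a0 * M + (1 - ω a0) * M := by linarith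
        _ = M := by ring
    have hbound : ω a0 * Δ0^2/(2*σ^2) + ω abar * (Δ abar)^2/(2*σ^2) ≤ C := by
      have : (ω a0 * Δ0^2 + ω abar * (Δ abar)^2) / (2*σ^2) ≤ M / (2*σ^2) :=
        by gcongr
      calc ω a0 * Δ0^2/(2*σ^2) + ω abar * (Δ abar)^2/(2*σ^2)
          = (ω a0 * Δ0^2 + ω abar * (Δ abar)^2) / (2*σ^2) := by ring
        _ ≤ M / (2*σ^2) := this
        _ = C := by rw [hCdef]; ring
    have hbdd : BddBelow {w : ℝ | ∃ μ' ∈ Alt, w = ∑ a, ω a * ((μ a - μ' a) ^ 2 / (2 * σ ^ 2))} := by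
      refine ⟨0, ?_⟩
      rintro w ⟨μ'', -, rfl⟩
      exact Finset.sum_nonneg fun a _ => mul_nonneg (hω0 a) (by positivity)
    calc sInf {w : ℝ | ∃ μ' ∈ Alt, w = ∑ a, ω a * ((μ a - μ' a) ^ 2 / (2 * σ ^ 2))}
        ≤ ∑ a, ω a * ((μ a - μ' a) ^ 2 / (2 * σ ^ 2)) := csInf_le hbdd ⟨μ', hμ'Alt, rfl⟩
      _ = ω a0 * Δ0^2/(2*σ^2) + ω abar * (Δ abar)^2/(2*σ^2) := hcost
      _ ≤ C := hbound
  have hbddS : BddAbove {y : ℝ | ∃ ω : Fin K → ℝ, (∀ a, 0 ≤ ω a) ∧ (∑ a, ω a) = 1 ∧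
      y = sInf {w : ℝ | ∃ μ' ∈ Alt, w = ∑ a, ω a * ((μ a - μ' a) ^ 2 / (2 * σ ^ 2))}} := by
    refine ⟨C, ?_⟩
    rintro y ⟨ω, h0, h1, rfl⟩
    exact hub ω h0 h1
  constructor
  · -- lower bound
    set ωs : Fin K → ℝ := fun a => ((θ a) ^ 2)⁻¹ / T with hωs
    have hωs0 : ∀ a, 0 ≤ ωs a := by
      intro a
      have := hθpos a
      have := hTpos
      positivity
    have hωs1 : (∑ a, ωs a) = 1 := by
      rw [hωs]
      rw [← Finset.sum_div, ← hTdef, div_self (ne_of_gt hTpos)]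
    have hmem : sInf {w : ℝ | ∃ μ' ∈ Alt, w = ∑ a, ωs a * ((μ a - μ' a) ^ 2 / (2 * σ ^ 2))} ∈
        {y : ℝ | ∃ ω : Fin K → ℝ, (∀ a, 0 ≤ ω a) ∧ (∑ a, ω a) = 1 ∧
          y = sInf {w : ℝ | ∃ μ' ∈ Alt, w = ∑ a, ω a * ((μ a - μ' a) ^ 2 / (2 * σ ^ 2))}} :=
      ⟨ωs, hωs0, hωs1, rfl⟩
    have hWne : {w : ℝ | ∃ μ' ∈ Alt, w = ∑ a, ωs a * ((μ a - μ' a) ^ 2 / (2 * σ ^ 2))}.Nonempty := by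
      obtain ⟨μ', hμ'Alt, -⟩ := hcons a1 ha1 ωs
      exact ⟨_, μ', hμ'Alt, rfl⟩
    have hlb : 1 / (4 * σ ^ 2 * T) ≤
        sInf {w : ℝ | ∃ μ' ∈ Alt, w = ∑ a, ωs a * ((μ a - μ' a) ^ 2 / (2 * σ ^ 2))} := by
      refine le_csInf hWne ?_
      rintro w ⟨μ', hμ'Alt, rfl⟩
      rw [hAlt] at hμ'Alt
      obtain ⟨abar, hbar, hg⟩ := hμ'Alt
      have hsum2 : 1/2 ≤ ∑ a, ((θ a) ^ 2)⁻¹ * (μ a - μ' a) ^ 2 := by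
        have hx : θ abar ≤ (μ a0 - μ' a0) + (μ' abar - μ abar) := by
          have h1 := hg a0 (Ne.symm hbar)
          have h2 : Δ abar = μ a0 - μ abar := by rw [hΔ, if_neg hbar]
          have h3 := hθ abar
          linarith
        have hk := key_ineq Δ0 (θ abar) (μ a0 - μ' a0) (μ' abar - μ abar) hΔ0
          (hθge2 abar hbar) hx
        have pair_le : ∑ a ∈ ({a0, abar} : Finset (Fin K)), ((θ a) ^ 2)⁻¹ * (μ a - μ' a) ^ 2
            ≤ ∑ a, ((θ a) ^ 2)⁻¹ * (μ a - μ' a) ^ 2 :=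
          Finset.sum_le_sum_of_subset_of_nonneg (Finset.subset_univ _)
            (fun a _ _ => by have := hθpos a; positivity)
        rw [Finset.sum_pair (Ne.symm hbar)] at pair_le
        have heq2 : ((θ a0) ^ 2)⁻¹ * (μ a0 - μ' a0) ^ 2 + ((θ abar) ^ 2)⁻¹ * (μ abar - μ' abar) ^ 2
            = (Δ0 ^ 2)⁻¹ * (μ a0 - μ' a0) ^ 2 + ((θ abar) ^ 2)⁻¹ * (μ' abar - μ abar) ^ 2 := by
          rw [hθa0]; ring
        rw [heq2] at pair_le
        linarith
      have hE : ∑ a, ωs a * ((μ a - μ' a) ^ 2 / (2 * σ ^ 2))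
          = (∑ a, ((θ a) ^ 2)⁻¹ * (μ a - μ' a) ^ 2) * (T⁻¹ * (2 * σ ^ 2)⁻¹) := by
        rw [Finset.sum_mul]
        exact Finset.sum_congr rfl fun a _ => by rw [hωs]; ring
      rw [hE]
      have hpos : (0:ℝ) ≤ T⁻¹ * (2 * σ ^ 2)⁻¹ :=
        le_of_lt (mul_pos (inv_pos.mpr hTpos) (inv_pos.mpr hσ2))
      have hfin : 1 / (4 * σ ^ 2 * T) = (1/2) * (T⁻¹ * (2 * σ ^ 2)⁻¹) := by
        field_simp
        ring
      rw [hfin]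
      exact mul_le_mul_of_nonneg_right hsum2 hpos
    exact le_trans hlb (le_csSup hbddS hmem)
  · refine Real.sSup_le ?_ hCnn
    rintro y ⟨ω, h0, h1, rfl⟩
    exact hub ω h0 h1
end

section
/- Let n and K be integers with 1 \le n \le K - 1. Then \sum_{j=1}^{K-n} \left( \frac{n+j-1}{K-1} \right)^{n-1} \le \frac{e (K-1)}{n}, where e = \exp(1). -/
lemma aux_pow_sub_pow (a b : ℝ) (ha : 0 ≤ a) (hab : a ≤ b) (n : ℕ) :
    (n : ℝ) * a ^ (n - 1) * (b - a) ≤ b ^ n - a ^ n := by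
  rw [← geom_sum₂_mul]
  apply mul_le_mul_of_nonneg_right _ (by linarith)
  calc (n : ℝ) * a ^ (n - 1) = ∑ _i ∈ Finset.range n, a ^ (n - 1) := by
        rw [Finset.sum_const, Finset.card_range, nsmul_eq_mul]
    _ ≤ ∑ i ∈ Finset.range n, b ^ i * a ^ (n - 1 - i) := by
        apply Finset.sum_le_sum
        intro i hi
        rw [Finset.mem_range] at hi
        calc a ^ (n - 1) = a ^ i * a ^ (n - 1 - i) := by
              rw [← pow_add]; congr 1; omega
          _ ≤ b ^ i * a ^ (n - 1 - i) :=
              mul_le_mul_of_nonneg_right (pow_le_pow_left₀ ha hab i)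
                (pow_nonneg ha _)

/-- For integers `1 ≤ n ≤ K - 1`,
`∑_{j=1}^{K-n} ((n+j-1)/(K-1))^{n-1} ≤ e (K-1) / n`. -/
theorem stmt_11 (n K : ℕ) (hn : 1 ≤ n) (hK : n ≤ K - 1) :
    ∑ j ∈ Finset.Icc 1 (K - n),
        (((n : ℝ) + (j : ℝ) - 1) / ((K : ℝ) - 1)) ^ (n - 1) ≤
      Real.exp 1 * ((K : ℝ) - 1) / (n : ℝ) := by
  have hK2 : 2 ≤ K := by omega
  have hn1 : (1:ℝ) ≤ (n:ℝ) := by exact_mod_cast hn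
  have hc1 : (1:ℝ) ≤ (K:ℝ) - 1 := by
    have : (2:ℝ) ≤ (K:ℝ) := by exact_mod_cast hK2
    linarith
  have hc0 : (0:ℝ) < (K:ℝ) - 1 := by linarith
  have hn0 : (0:ℝ) < (n:ℝ) := by linarith
  set c : ℝ := (K:ℝ) - 1 with hcdef
  set M : ℕ := K - n with hMdef
  have hnM : (n:ℝ) + (M:ℝ) = (K:ℝ) := by
    have h : n + M = K := by omega
    exact_mod_cast h
  have hnc : (n:ℝ) ≤ c := by
    have h : n + 1 ≤ K := by omega
    have h' : (n:ℝ) + 1 ≤ (K:ℝ) := by exact_mod_cast h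
    simp only [hcdef]; linarith
  set f : ℕ → ℝ := fun j => (((n:ℝ) + (j:ℝ) - 1) / c) ^ n with hf
  have ha : ∀ j : ℕ, (0:ℝ) ≤ ((n:ℝ) + (j:ℝ) - 1) / c := by
    intro j
    apply div_nonneg _ hc0.le
    have : (0:ℝ) ≤ (j:ℝ) := Nat.cast_nonneg j
    linarith
  -- termwise bound
  have step : ∀ j : ℕ, (((n:ℝ) + (j:ℝ) - 1)/c) ^ (n-1) ≤ (c/n) * (f (j+1) - f j) := by
    intro j
    set a : ℝ := ((n:ℝ) + (j:ℝ) - 1)/c with hadef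
    set b : ℝ := ((n:ℝ) + ((j+1:ℕ):ℝ) - 1)/c with hbdef
    have hba : b - a = 1/c := by
      simp only [hadef, hbdef]
      push_cast
      field_simp
      ring
    have hab : a ≤ b := by
      have : (0:ℝ) < 1/c := by positivity
      linarith [hba]
    have h := aux_pow_sub_pow a b (ha j) hab n
    rw [hba] at h
    have hfj : f (j+1) - f j = b ^ n - a ^ n := by simp [hf, hadef, hbdef]
    rw [hfj]
    have h2 : c/(n:ℝ) * ((n:ℝ) * a ^ (n-1) * (1/c)) ≤ c/(n:ℝ) * (b^n - a^n) :=
      mul_le_mul_of_nonneg_left h (by positivity)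
    have h3 : c/(n:ℝ) * ((n:ℝ) * a ^ (n-1) * (1/c)) = a ^ (n-1) := by
      field_simp
    linarith
  -- telescoping
  have tel : ∑ j ∈ Finset.Icc 1 M, (f (j+1) - f j) = f (M+1) - f 1 := by
    induction M with
    | zero => simp
    | succ m ih =>
      rw [Finset.sum_Icc_succ_top (by omega), ih]
      ring
  calc ∑ j ∈ Finset.Icc 1 M, (((n:ℝ) + (j:ℝ) - 1)/c) ^ (n-1)
      ≤ ∑ j ∈ Finset.Icc 1 M, (c/n) * (f (j+1) - f j) :=
        Finset.sum_le_sum fun j _ => step j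
    _ = (c/n) * (f (M+1) - f 1) := by rw [← Finset.mul_sum, tel]
    _ ≤ (c/n) * f (M+1) := by
        have h1 : 0 ≤ f 1 := pow_nonneg (ha 1) n
        have : f (M+1) - f 1 ≤ f (M+1) := by linarith
        exact mul_le_mul_of_nonneg_left this (by positivity)
    _ ≤ (c/n) * Real.exp 1 := by
        apply mul_le_mul_of_nonneg_left _ (by positivity)
        have hfM : f (M+1) = ((K:ℝ)/c) ^ n := by
          simp only [hf]
          congr 1
          push_cast
          rw [← hnM]
          ring_nf
        rw [hfM]
        have hKc : (K:ℝ)/c = 1 + 1/c := by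
          field_simp [hcdef]
          ring
        rw [hKc]
        calc (1 + 1/c) ^ n ≤ (Real.exp (1/c)) ^ n := by
              apply pow_le_pow_left₀ (by positivity) _ n
              linarith [Real.add_one_le_exp (1/c)]
          _ = Real.exp ((n:ℝ) * (1/c)) := by
              rw [← Real.exp_nat_mul]
          _ ≤ Real.exp 1 := by
              apply Real.exp_le_exp.mpr
              rw [mul_one_div]
              exact (div_le_one hc0).mpr hnc
    _ = Real.exp 1 * c / n := by ring
end
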